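/- With R, Φ, x₀, y₀ as in the previous context (R(x) = √(x₁²+x₂²) + |x₃|, Φx = (x₁+x₂, x₁+x₂+x₃), x₀ = (1,1,0)), x₀ is NOT a sharp minimizer: there is no c > 0 with R(x) - R(x₀) ≥ c‖x - x₀‖ for all feasible x near x₀. -/

import Mathlib

/-!
Along the feasible line `x₀ + t • (1, -1, 0)` the distance to `x₀` grows like `√2 |t|`, while
`R` only grows like `√(2 + 2t²) - √2 ≤ t² / √2`, by the tangent-line bound for the concave `√`.
A linear lower bound `c √2 t ≤ t² / √2` therefore fails for `0 < t < 2c`.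
-/

noncomputable def R7 (x : EuclideanSpace ℝ (Fin 3)) : ℝ :=
  Real.sqrt ((x 0) ^ 2 + (x 1) ^ 2) + |x 2|

noncomputable def x7 : EuclideanSpace ℝ (Fin 3) :=
  (WithLp.equiv 2 (Fin 3 → ℝ)).symm ![1, 1, 0]

open Real

lemma sqrt_add_le_sqrt_add_div {a b : ℝ} (ha : 0 < a) (hb : 0 ≤ b) :
    √(a + b) ≤ √a + b / (2 * √a) := by
  have hs : 0 < √a := Real.sqrt_pos.mpr ha
  rw [Real.sqrt_le_left (by positivity)]
  have hsq : (√a + b / (2 * √a)) ^ 2 = a + b + (b / (2 * √a)) ^ 2 := by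
    field_simp
    rw [Real.sq_sqrt ha.le]
    ring
  rw [hsq]
  nlinarith [sq_nonneg (b / (2 * √a))]

noncomputable def feasibleLine (t : ℝ) : EuclideanSpace ℝ (Fin 3) := !₂[1 + t, 1 - t, 0]

lemma norm_feasibleLine_sub_x7 (t : ℝ) : ‖feasibleLine t - x7‖ = √2 * |t| := by
  rw [EuclideanSpace.norm_eq, Fin.sum_univ_three]
  simp only [Fin.isValue, feasibleLine, x7, WithLp.equiv_symm_apply, PiLp.sub_apply,
    Matrix.cons_val_zero, add_sub_cancel_left, norm_eq_abs, sq_abs, Matrix.cons_val_one,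
    sub_sub_cancel_left, norm_neg, Matrix.cons_val, sub_self, norm_zero, ne_eq,
    OfNat.ofNat_ne_zero, not_false_eq_true, zero_pow, add_zero]
  rw [← two_mul, Real.sqrt_mul zero_le_two, Real.sqrt_sq_eq_abs]

lemma R7_x7 : R7 x7 = √2 := by
  simp [R7, x7, one_add_one_eq_two]

lemma R7_feasibleLine (t : ℝ) : R7 (feasibleLine t) = √(2 + 2 * t ^ 2) := by
  simp only [R7, feasibleLine, Fin.isValue, PiLp.toLp_apply, Matrix.cons_val_zero,
    Matrix.cons_val_one, Matrix.cons_val, abs_zero, add_zero]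
  ring_nf

lemma R7_feasibleLine_sub_le (t : ℝ) : R7 (feasibleLine t) - R7 x7 ≤ t ^ 2 / √2 := by
  have h := sqrt_add_le_sqrt_add_div two_pos (by positivity : 0 ≤ 2 * t ^ 2)
  rw [R7_feasibleLine, R7_x7]
  have : 2 * t ^ 2 / (2 * √2) = t ^ 2 / √2 := by field_simp
  linarith

theorem stmt7 :
    ¬ ∃ c ε : ℝ, 0 < c ∧ 0 < ε ∧
      ∀ x : EuclideanSpace ℝ (Fin 3), x 0 + x 1 = 2 → x 0 + x 1 + x 2 = 2 →
        ‖x - x7‖ ≤ ε → c * ‖x - x7‖ ≤ R7 x - R7 x7 := by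
  rintro ⟨c, ε, hc, hε, hsharp⟩
  set t := min (ε / √2) c
  have hs2 : 0 < √2 := by positivity
  have ht : 0 < t := lt_min (by positivity) hc
  have hnorm : ‖feasibleLine t - x7‖ = √2 * t := by
    rw [norm_feasibleLine_sub_x7, abs_of_pos ht]
  have hclose : ‖feasibleLine t - x7‖ ≤ ε := by
    rw [hnorm, ← le_div_iff₀' hs2]
    exact min_le_left _ _
  have hlin := hsharp (feasibleLine t) (by simp [feasibleLine]; ring)
    (by simp [feasibleLine]; ring) hclose
  have hquad := R7_feasibleLine_sub_le t
  rw [hnorm] at hlin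
  -- c √2 t ≤ t² / √2 forces 2c ≤ t, against t ≤ c
  have : 2 * c * t ≤ t ^ 2 := by
    have := (le_div_iff₀ hs2).mp (hlin.trans hquad)
    nlinarith [Real.mul_self_sqrt (zero_le_two : (0:ℝ) ≤ 2)]
  nlinarith [min_le_right (ε / √2) c]
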